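/- Let R₁ be a K×K positive semidefinite diagonal matrix, α > 0, β ∈ [0,1], c₂ ∈ [0,1], N > 0. Define for e ≥ 0: t₁(e) = (1-c₂)/(1+e), t₂(e) = c₂/(1+(1-β)²e), and φ(e) = (1/N) tr( R₁ (α I_K + (t₁(e)+t₂(e)(1-β)²) R₁)^{-1} ). Then φ is a monotone nondecreasing continuous map on [0,∞) that is bounded above, and hence the fixed-point equation e = φ(e) has at least one nonnegative solution. -/
import Mathlib

open Matrix

theorem stmt_14 {K : ℕ} (r : Fin K → ℝ) (hr : ∀ k, 0 ≤ r k)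
    (α β c₂ N : ℝ) (hα : 0 < α) (hβ0 : 0 ≤ β) (hβ1 : β ≤ 1)
    (hc0 : 0 ≤ c₂) (hc1 : c₂ ≤ 1) (hN : 0 < N)
    (t₁ t₂ φ : ℝ → ℝ)
    (ht₁ : ∀ e, t₁ e = (1 - c₂) / (1 + e))
    (ht₂ : ∀ e, t₂ e = c₂ / (1 + (1 - β) ^ 2 * e))
    (hφ : ∀ e, φ e = (1 / N) *
      (Matrix.diagonal r *
        (α • (1 : Matrix (Fin K) (Fin K) ℝ) +
          (t₁ e + t₂ e * (1 - β) ^ 2) • Matrix.diagonal r)⁻¹).trace) :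
    MonotoneOn φ (Set.Ici 0) ∧ ContinuousOn φ (Set.Ici 0) ∧
      (∃ C : ℝ, ∀ e ∈ Set.Ici (0 : ℝ), φ e ≤ C) ∧
      ∃ e : ℝ, 0 ≤ e ∧ e = φ e := by
  set s : ℝ → ℝ := fun e => t₁ e + t₂ e * (1 - β) ^ 2 with hs
  have hb2 : (0:ℝ) ≤ (1 - β) ^ 2 := sq_nonneg _
  have hden1 : ∀ e : ℝ, 0 ≤ e → (0:ℝ) < 1 + e := fun e he => by linarith
  have hden2 : ∀ e : ℝ, 0 ≤ e → (0:ℝ) < 1 + (1 - β) ^ 2 * e := fun e he => by nlinarith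
  have hs_nonneg : ∀ e : ℝ, 0 ≤ e → 0 ≤ s e := by
    intro e he
    have := hden1 e he; have := hden2 e he
    simp only [hs, ht₁, ht₂]
    have h1 : (0:ℝ) ≤ (1 - c₂) / (1 + e) := div_nonneg (by linarith) (by linarith)
    have h2 : (0:ℝ) ≤ c₂ / (1 + (1 - β) ^ 2 * e) := div_nonneg hc0 (by linarith)
    nlinarith
  have hs_anti : ∀ e₁ e₂ : ℝ, 0 ≤ e₁ → e₁ ≤ e₂ → s e₂ ≤ s e₁ := by
    intro e₁ e₂ h1 h12
    have h2 : (0:ℝ) ≤ e₂ := le_trans h1 h12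
    simp only [hs, ht₁, ht₂]
    have ha : (1 - c₂) / (1 + e₂) ≤ (1 - c₂) / (1 + e₁) := by
      apply div_le_div_of_nonneg_left (by linarith) (hden1 e₁ h1) (by linarith)
    have hb : c₂ / (1 + (1 - β) ^ 2 * e₂) * (1 - β) ^ 2
        ≤ c₂ / (1 + (1 - β) ^ 2 * e₁) * (1 - β) ^ 2 := by
      apply mul_le_mul_of_nonneg_right _ hb2
      apply div_le_div_of_nonneg_left hc0 (hden2 e₁ h1) (by nlinarith)
    linarith
  have key : ∀ e : ℝ, 0 ≤ e →
      φ e = (1 / N) * ∑ k, r k * (α + s e * r k)⁻¹ := by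
    intro e he
    have hpos : ∀ k, (0:ℝ) < α + s e * r k := fun k => by
      have := mul_nonneg (hs_nonneg e he) (hr k); linarith
    rw [hφ e]
    have hmat : α • (1 : Matrix (Fin K) (Fin K) ℝ) + s e • Matrix.diagonal r
        = Matrix.diagonal (fun k => α + s e * r k) := by
      ext i j
      by_cases h : i = j <;>
        simp [Matrix.diagonal, h, Matrix.one_apply, mul_comm]
    have hinv : (Matrix.diagonal (fun k => α + s e * r k))⁻¹
        = Matrix.diagonal (fun k => (α + s e * r k)⁻¹) := by
      apply Matrix.inv_eq_right_inv
      rw [Matrix.diagonal_mul_diagonal]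
      have : (fun k => (α + s e * r k) * (α + s e * r k)⁻¹) = fun _ : Fin K => (1:ℝ) :=
        funext fun k => mul_inv_cancel₀ (ne_of_gt (hpos k))
      rw [this, Matrix.diagonal_one]
    rw [hmat, hinv, Matrix.diagonal_mul_diagonal, Matrix.trace_diagonal]
  have hterm_mono : ∀ e₁ e₂ : ℝ, 0 ≤ e₁ → e₁ ≤ e₂ → ∀ k,
      r k * (α + s e₁ * r k)⁻¹ ≤ r k * (α + s e₂ * r k)⁻¹ := by
    intro e₁ e₂ h1 h12 k
    have h2 : (0:ℝ) ≤ e₂ := le_trans h1 h12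
    have hp2 : (0:ℝ) < α + s e₂ * r k := by
      have := mul_nonneg (hs_nonneg e₂ h2) (hr k); linarith
    apply mul_le_mul_of_nonneg_left _ (hr k)
    apply inv_anti₀ hp2
    have := hs_anti e₁ e₂ h1 h12
    nlinarith [hr k]
  have hmono : MonotoneOn φ (Set.Ici 0) := by
    intro e₁ h1 e₂ h2 h12
    rw [key e₁ h1, key e₂ h2]
    apply mul_le_mul_of_nonneg_left _ (by positivity)
    exact Finset.sum_le_sum fun k _ => hterm_mono e₁ e₂ h1 h12 k
  have hs_cont : ContinuousOn s (Set.Ici 0) := by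
    simp only [hs]
    apply ContinuousOn.add
    · apply ContinuousOn.congr (f := fun e => (1 - c₂) / (1 + e))
      · apply ContinuousOn.div continuousOn_const (by fun_prop)
        intro e he; exact ne_of_gt (hden1 e he)
      · intro e he; exact ht₁ e
    · apply ContinuousOn.mul _ continuousOn_const
      apply ContinuousOn.congr (f := fun e => c₂ / (1 + (1 - β) ^ 2 * e))
      · apply ContinuousOn.div continuousOn_const (by fun_prop)
        intro e he; exact ne_of_gt (hden2 e he)
      · intro e he; exact ht₂ e
  have hcont : ContinuousOn φ (Set.Ici 0) := by
    apply ContinuousOn.congr (f := fun e => (1 / N) * ∑ k, r k * (α + s e * r k)⁻¹)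
    · apply ContinuousOn.mul continuousOn_const
      apply continuousOn_finset_sum
      intro k _
      apply ContinuousOn.mul continuousOn_const
      apply ContinuousOn.inv₀
      · exact (continuousOn_const.add (hs_cont.mul continuousOn_const))
      · intro e he
        have := mul_nonneg (hs_nonneg e he) (hr k)
        exact ne_of_gt (by linarith)
    · intro e he; exact key e he
  have hboundval : ∀ e ∈ Set.Ici (0:ℝ), φ e ≤ (1 / N) * ∑ k, r k * α⁻¹ := by
    intro e he
    rw [key e he]
    apply mul_le_mul_of_nonneg_left _ (by positivity)
    apply Finset.sum_le_sum
    intro k _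
    apply mul_le_mul_of_nonneg_left _ (hr k)
    apply inv_anti₀ hα
    have := mul_nonneg (hs_nonneg e he) (hr k); linarith
  refine ⟨hmono, hcont, ⟨_, hboundval⟩, ?_⟩
  set C : ℝ := (1 / N) * ∑ k, r k * α⁻¹ with hC
  have hC0 : 0 ≤ C := by
    apply mul_nonneg (by positivity)
    exact Finset.sum_nonneg fun k _ => mul_nonneg (hr k) (by positivity)
  have hφ0 : 0 ≤ φ 0 := by
    rw [key 0 le_rfl]
    apply mul_nonneg (by positivity)
    apply Finset.sum_nonneg
    intro k _
    apply mul_nonneg (hr k)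
    have := mul_nonneg (hs_nonneg 0 le_rfl) (hr k)
    positivity
  have hsub : Set.Icc (0:ℝ) C ⊆ Set.Ici 0 := fun x hx => hx.1
  have hg : ContinuousOn (fun e => φ e - e) (Set.Icc 0 C) :=
    ((hcont.mono hsub).sub continuousOn_id)
  have := intermediate_value_Icc' hC0 hg
  have h0mem : (0:ℝ) ∈ Set.Icc (φ C - C) (φ 0 - 0) := by
    constructor
    · have := hboundval C (Set.mem_Ici.mpr hC0); simpa using this
    · simpa using hφ0
  obtain ⟨e, he, heq⟩ := this h0mem
  simp only [] at heq
  exact ⟨e, he.1, by linarith⟩
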